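/- arXiv:2311.00127 — 3 statements merged into one kernel-verified Lean document; each statement's English description precedes it below -/
import Mathlib

section
/- Let R be a p-complete ring, (M, M₁) a pair over R: M a finite projective W(R)-module and M₁ ⊆ M a submodule with I_R·M ⊆ M₁ such that M₁/I_R M is a direct summand of M/I_R M. Define the dual pair (M^∨, M₁*), where M^∨ = Hom_{W(R)}(M, W(R)) and M₁* = {ω ∈ M^∨ : ω(M₁) ⊆ I_R}. Then under the canonical isomorphism M → M^∨∨, the double dual (M₁*)* is carried back to M₁, i.e. (M, M₁)^∨∨ ≅ (M, M₁). -/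
/-- For a submodule `M₁ ⊆ M` and an ideal `I`, the "dual" submodule
`M₁* = {ω ∈ M^∨ : ω(M₁) ⊆ I}` of the linear dual `M^∨`. -/
def pairDualSub {A : Type*} [CommRing A] {M : Type*} [AddCommGroup M] [Module A M]
    (I : Ideal A) (M₁ : Submodule A M) : Submodule A (Module.Dual A M) where
  carrier := {ω | ∀ m ∈ M₁, ω m ∈ I}
  add_mem' := by
    intro a b ha hb m hm
    simpa using I.add_mem (ha m hm) (hb m hm)
  zero_mem' := by
    intro m hm
    simpa using I.zero_mem
  smul_mem' := by
    intro c ω hω m hm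
    simpa [smul_eq_mul] using I.mul_mem_left c (hω m hm)

/-!
If `m` lies in the double dual of `M₁`, then for every endomorphism `g` of `M` carrying `M₁`
into `I M`, every functional `e` gives `e ∘ g ∈ M₁*`, so `e (g m) ∈ I`; as `M` is projective,
this forces `g m ∈ I M`. Now take for `g` a lift (again by projectivity) of the projection of
`M / I M` onto a complement of `M₁ / I M`: since `g m ∈ I M`, the image of `m` in `M / I M`
lies in `M₁ / I M`, i.e. `m ∈ M₁`.
-/

section PairDual

variable {A M : Type*} [CommRing A] [AddCommGroup M] [Module A M]

theorem Module.Projective.mem_smul_top_of_forall_dual_mem [Module.Projective A M] (I : Ideal A)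
    {m : M} (h : ∀ e : Module.Dual A M, e m ∈ I) : m ∈ I • (⊤ : Submodule A M) := by
  obtain ⟨s, hs⟩ := Module.projective_def.mp ‹Module.Projective A M›
  rw [← hs m, Finsupp.linearCombination_apply]
  exact Submodule.sum_mem _ fun i _ =>
    Submodule.smul_mem_smul (h ((Finsupp.lapply i).comp s)) trivial

theorem le_comap_eval_pairDualSub_pairDualSub (I : Ideal A) (M₁ : Submodule A M) :
    M₁ ≤ (pairDualSub I (pairDualSub I M₁)).comap (Module.Dual.eval A M) :=
  fun m hm _ hω => hω m hm

theorem apply_mem_smul_top_of_mem_comap_eval_pairDualSub [Module.Projective A M] {I : Ideal A}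
    {M₁ : Submodule A M} {m : M}
    (hm : m ∈ (pairDualSub I (pairDualSub I M₁)).comap (Module.Dual.eval A M))
    {g : M →ₗ[A] M} (hg : M₁ ≤ (I • ⊤ : Submodule A M).comap g) :
    g m ∈ I • (⊤ : Submodule A M) := by
  refine Module.Projective.mem_smul_top_of_forall_dual_mem I fun e => hm (e ∘ₗ g) fun x hx => ?_
  have hex : e (g x) ∈ I • (⊤ : Submodule A A) := Submodule.smul_top_le_comap_smul_top I e (hg hx)
  simpa using hex

theorem Module.Projective.mem_of_isCompl_map_mkQ [Module.Projective A M] {T M₁ : Submodule A M}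
    (hT : T ≤ M₁) {C : Submodule A (M ⧸ T)} (hC : IsCompl (M₁.map T.mkQ) C) {m : M}
    (hm : ∀ g : M →ₗ[A] M, M₁ ≤ T.comap g → g m ∈ T) : m ∈ M₁ := by
  obtain ⟨g, hg⟩ := Module.projective_lifting_property T.mkQ (C.projection _ hC.symm ∘ₗ T.mkQ)
    T.mkQ_surjective
  have hproj : ∀ x, C.projection _ hC.symm (T.mkQ x) = T.mkQ (g x) := fun x =>
    (LinearMap.congr_fun hg x).symm
  have hgM₁ : M₁ ≤ T.comap g := fun x hx => by
    rw [Submodule.mem_comap, ← Submodule.Quotient.mk_eq_zero, ← Submodule.mkQ_apply, ← hproj,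
      Submodule.projection_apply_eq_zero_iff]
    exact Submodule.mem_map_of_mem hx
  have hmq : T.mkQ m ∈ M₁.map T.mkQ := by
    rw [← Submodule.projection_apply_eq_zero_iff hC.symm, hproj, Submodule.mkQ_apply,
      Submodule.Quotient.mk_eq_zero]
    exact hm g hgM₁
  rwa [← Submodule.mem_comap, Submodule.comap_map_mkQ, sup_eq_right.mpr hT] at hmq

theorem comap_eval_pairDualSub_pairDualSub [Module.Projective A M] {I : Ideal A}
    {M₁ : Submodule A M} (hIM : I • (⊤ : Submodule A M) ≤ M₁)
    (hsummand : ∃ C, IsCompl (M₁.map (I • (⊤ : Submodule A M)).mkQ) C) :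
    (pairDualSub I (pairDualSub I M₁)).comap (Module.Dual.eval A M) = M₁ := by
  obtain ⟨C, hC⟩ := hsummand
  refine le_antisymm (fun m hm => ?_) (le_comap_eval_pairDualSub_pairDualSub I M₁)
  exact Module.Projective.mem_of_isCompl_map_mkQ hIM hC fun g hg =>
    apply_mem_smul_top_of_mem_comap_eval_pairDualSub hm hg

end PairDual

theorem pair_double_dual_general
    (p : ℕ) [Fact p.Prime] (R : Type*) [CommRing R]
    (M : Type*) [AddCommGroup M] [Module (WittVector p R) M]
    [Module.Projective (WittVector p R) M]
    (M₁ : Submodule (WittVector p R) M)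
    (hIM : RingHom.ker (WittVector.constantCoeff : WittVector p R →+* R) •
        (⊤ : Submodule (WittVector p R) M) ≤ M₁)
    (hsummand : ∃ C : Submodule (WittVector p R)
        (M ⧸ (RingHom.ker (WittVector.constantCoeff : WittVector p R →+* R) •
          (⊤ : Submodule (WittVector p R) M))),
        IsCompl (M₁.map (RingHom.ker (WittVector.constantCoeff : WittVector p R →+* R) •
          (⊤ : Submodule (WittVector p R) M)).mkQ) C) :
    Submodule.comap (Module.Dual.eval (WittVector p R) M)
      (pairDualSub (RingHom.ker (WittVector.constantCoeff : WittVector p R →+* R))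
        (pairDualSub (RingHom.ker (WittVector.constantCoeff : WittVector p R →+* R)) M₁))
      = M₁ :=
  comap_eval_pairDualSub_pairDualSub hIM hsummand

/-- Let `R` be a `p`-complete ring and `(M, M₁)` a pair over `R`:
`M` a finite projective `W(R)`-module and `M₁ ⊆ M` a submodule with `I_R·M ⊆ M₁` such that
`M₁/I_R M` is a direct summand of `M/I_R M`.  Define the dual pair `(M^∨, M₁*)`, where
`M^∨ = Hom_{W(R)}(M, W(R))` and `M₁* = {ω ∈ M^∨ : ω(M₁) ⊆ I_R}`.  Then under the canonical
map `M → M^∨∨` the double dual `(M₁*)*` is carried back to `M₁`. -/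
theorem pair_double_dual
    (p : ℕ) [Fact p.Prime] (R : Type*) [CommRing R]
    (hcomplete : IsAdicComplete (Ideal.span {(p : R)}) R)
    (M : Type*) [AddCommGroup M] [Module (WittVector p R) M]
    [Module.Finite (WittVector p R) M] [Module.Projective (WittVector p R) M]
    (M₁ : Submodule (WittVector p R) M)
    (hIM : RingHom.ker (WittVector.constantCoeff : WittVector p R →+* R) •
        (⊤ : Submodule (WittVector p R) M) ≤ M₁)
    (hsummand : ∃ C : Submodule (WittVector p R)
        (M ⧸ (RingHom.ker (WittVector.constantCoeff : WittVector p R →+* R) •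
          (⊤ : Submodule (WittVector p R) M))),
        IsCompl (M₁.map (RingHom.ker (WittVector.constantCoeff : WittVector p R →+* R) •
          (⊤ : Submodule (WittVector p R) M)).mkQ) C) :
    Submodule.comap (Module.Dual.eval (WittVector p R) M)
      (pairDualSub (RingHom.ker (WittVector.constantCoeff : WittVector p R →+* R))
        (pairDualSub (RingHom.ker (WittVector.constantCoeff : WittVector p R →+* R)) M₁))
      = M₁ :=
  pair_double_dual_general p R M M₁ hIM hsummand
end

section
/- Let R be a p-complete local ring (with residue characteristic p) and let (M, M₁) be a pair over R with M free of rank h over W(R). Then (M, M₁) admits a normal decomposition: there exist free W(R)-submodules L, T ⊆ M with M = L ⊕ T and M₁ = L ⊕ I_R·T. -/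
/-!
Over a local ring `R` in which `p` is not a unit, `W(R)` is again local: if the zeroth coefficient
of a Witt vector `x` is a unit, then so are all its ghost components (they agree with powers of
`x₀` modulo `p`), and `x` can then be inverted coefficient by coefficient, because the
`(n+1)`-st coefficient of `x * y` is `y_{n+1} * w_{n+1}(x)` plus a function of `y_0, …, y_n`.
Hence `I_R` lies in the maximal ideal of `W(R)`.

Over a local ring, let `C'` be the preimage of the complement of `M₁ / I_R M`, so that
`M₁ + C' = M` and `M₁ ∩ C' = I_R M ⊆ 𝔪M`. The images of `M₁` and `C'` in `k ⊗ M` are then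
complementary, and lifting bases of them into `M₁` and `C'` gives a basis of `M`, by
Nakayama's lemma and flatness. The spans `L ⊆ M₁` and `T ⊆ C'` of the two halves satisfy
`M₁ = L ⊕ (M₁ ∩ T)` and `M₁ ∩ T = I_R M ∩ T = I_R T`.
-/

namespace WittVector

open Finset MvPolynomial

variable {p : ℕ} {R : Type*} [CommRing R]

local notation "𝕎" => WittVector p

theorem coeff_init (n i : ℕ) (x : 𝕎 R) :
    (init n x).coeff i = if i < n then x.coeff i else 0 := by
  simp [init, select, coeff_mk]

variable [Fact p.Prime]

theorem ghostComponent_eq_sum (n : ℕ) (x : 𝕎 R) :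
    ghostComponent n x = ∑ i ∈ range (n + 1), (p : R) ^ i * x.coeff i ^ p ^ (n - i) := by
  rw [ghostComponent_apply, aeval_wittPolynomial]

theorem ghostComponent_zero (x : 𝕎 R) : ghostComponent 0 x = x.coeff 0 := by
  simp [ghostComponent_eq_sum]

theorem mul_coeff_succ (x y : 𝕎 R) (n : ℕ) :
    (x * y).coeff (n + 1) =
      y.coeff (n + 1) * ghostComponent (n + 1) x + (x * init (n + 1) y).coeff (n + 1) := by
  have hinit : ∀ i < n + 1, (init (n + 1) y).coeff i = y.coeff i := fun i hi => by
    rw [coeff_init, if_pos hi]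
  -- `polyOfInterest p n` is `(x * y)_{n+1}` minus its terms involving `x_{n+1}` and `y_{n+1}`,
  -- and it only involves coefficients of index at most `n`.
  have hpeval : peval (polyOfInterest p n) ![fun i => x.coeff i, fun i => y.coeff i] =
      peval (polyOfInterest p n) ![fun i => x.coeff i, fun i => (init (n + 1) y).coeff i] := by
    refine hom_congr_vars (by ext1; simp) (fun v hv _ => ?_) rfl
    obtain ⟨j, i⟩ := v
    have hi : i < n + 1 := (mem_product.1 (polyOfInterest_vars p n hv)).2 |> mem_range.1
    fin_cases j <;> simp [hinit i hi]
  have hghost : ghostComponent (n + 1) y =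
      ghostComponent (n + 1) (init (n + 1) y) + (p : R) ^ (n + 1) * y.coeff (n + 1) := by
    have hlow : ∑ i ∈ range (n + 1), (p : R) ^ i * (init (n + 1) y).coeff i ^ p ^ (n + 1 - i) =
        ∑ i ∈ range (n + 1), (p : R) ^ i * y.coeff i ^ p ^ (n + 1 - i) :=
      sum_congr rfl fun i hi => by rw [hinit i (mem_range.1 hi)]
    rw [ghostComponent_eq_sum, ghostComponent_eq_sum, sum_range_succ _ (n + 1),
      sum_range_succ _ (n + 1), hlow, coeff_init, if_neg (lt_irrefl _)]
    simp
  rw [peval_polyOfInterest, peval_polyOfInterest, coeff_init, if_neg (lt_irrefl _)] at hpeval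
  simp only [← ghostComponent_eq_sum] at hpeval
  linear_combination hpeval + x.coeff (n + 1) * hghost

/-- The coefficients of the inverse of `x`, solved for one at a time using `mul_coeff_succ`. -/
noncomputable def invCoeff (x : 𝕎 R) : ℕ → R
  | 0 => Ring.inverse (x.coeff 0)
  | n + 1 => -Ring.inverse (ghostComponent (n + 1) x) *
      (x * (TruncatedWittVector.mk p fun i : Fin (n + 1) => invCoeff x i).out).coeff (n + 1)

theorem mul_mk_invCoeff {x : 𝕎 R} (hx : ∀ n, IsUnit (ghostComponent n x)) :
    x * mk p (invCoeff x) = 1 := by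
  ext (_ | n)
  · rw [mul_coeff_zero, one_coeff_zero, coeff_mk, invCoeff,
      Ring.mul_inverse_cancel _ (ghostComponent_zero x ▸ hx 0)]
  · rw [mul_coeff_succ, ← out_truncateFun, one_coeff_eq_of_pos _ _ _ n.succ_pos, coeff_mk,
      invCoeff, mul_right_comm, neg_mul, Ring.inverse_mul_cancel _ (hx (n + 1)), neg_mul, one_mul]
    exact neg_add_cancel _

theorem isUnit_of_forall_isUnit_ghostComponent {x : 𝕎 R}
    (hx : ∀ n, IsUnit (ghostComponent n x)) : IsUnit x :=
  .of_mul_eq_one _ (mul_mk_invCoeff hx)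

theorem isUnit_ghostComponent (hp : (p : R) ∈ Ideal.jacobson ⊥) {x : 𝕎 R}
    (hx : IsUnit (x.coeff 0)) (n : ℕ) : IsUnit (ghostComponent n x) := by
  obtain ⟨u, hu⟩ := hx.pow (p ^ n)
  set s := ∑ i ∈ range n, (p : R) ^ i * x.coeff (i + 1) ^ p ^ (n - (i + 1))
  have hsplit : ghostComponent n x = u * ((p : R) * (s * ↑u⁻¹) + 1) := by
    have htail : ∑ i ∈ range n, (p : R) ^ (i + 1) * x.coeff (i + 1) ^ p ^ (n - (i + 1)) =
        p * s := by
      rw [mul_sum]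
      exact sum_congr rfl fun i _ => by ring
    rw [ghostComponent_eq_sum, sum_range_succ', htail, pow_zero, one_mul, Nat.sub_zero, ← hu]
    linear_combination (-(p : R) * s) * u.mul_inv
  rw [hsplit]
  exact u.isUnit.mul (Ideal.mem_jacobson_bot.1 hp _)

theorem isUnit_iff_isUnit_coeff_zero (hp : (p : R) ∈ Ideal.jacobson ⊥) {x : 𝕎 R} :
    IsUnit x ↔ IsUnit (x.coeff 0) :=
  ⟨fun h => ghostComponent_zero x ▸ h.map (ghostComponent 0),
    fun h => isUnit_of_forall_isUnit_ghostComponent (isUnit_ghostComponent hp h)⟩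

theorem isLocalRing [IsLocalRing R] (hp : (p : R) ∈ IsLocalRing.maximalIdeal R) :
    IsLocalRing (𝕎 R) := by
  rw [← IsLocalRing.jacobson_eq_maximalIdeal ⊥ bot_ne_top] at hp
  refine IsLocalRing.of_isUnit_or_isUnit_one_sub_self fun x => ?_
  have hsub : (1 - x).coeff 0 = 1 - x.coeff 0 := by
    rw [← ghostComponent_zero, map_sub, map_one, ghostComponent_zero]
  rw [isUnit_iff_isUnit_coeff_zero hp, isUnit_iff_isUnit_coeff_zero hp, hsub]
  exact IsLocalRing.isUnit_or_isUnit_one_sub_self _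

end WittVector

namespace Submodule

variable {R M N : Type*} [CommRing R] [AddCommGroup M] [Module R M] [AddCommGroup N] [Module R N]

theorem disjoint_map_of_inf_le_smul_top {I : Ideal R} {A B : Submodule R M} (f : M →ₗ[R] N)
    (hf : LinearMap.ker f = I • ⊤) (hsup : A ⊔ B = ⊤) (hinf : A ⊓ B ≤ I • ⊤) :
    Disjoint (A.map f) (B.map f) := by
  rw [disjoint_def]
  rintro _ ⟨a, ha, rfl⟩ ⟨b, hb, hba⟩
  have hab : a - b ∈ I • A ⊔ I • B := by
    rw [← smul_sup, hsup, ← hf, LinearMap.mem_ker, map_sub, hba, sub_self]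
  obtain ⟨a', ha', b', hb', hsum⟩ := mem_sup.1 hab
  have hAB : a - a' ∈ A ⊓ B := by
    refine ⟨sub_mem ha (smul_le_right ha'), ?_⟩
    rw [show a - a' = (a - b) - a' + b by abel, ← hsum, add_sub_cancel_left, add_comm]
    exact add_mem hb (smul_le_right hb')
  have hmem : a ∈ I • (⊤ : Submodule R M) := by
    simpa using add_mem (hinf hAB) (smul_mono_right I (le_top : A ≤ ⊤) ha')
  rwa [← hf] at hmem

theorem smul_top_inf_eq_smul_of_isCompl {L T : Submodule R M} (I : Ideal R) (h : IsCompl L T) :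
    I • ⊤ ⊓ T = I • T := by
  rw [← h.sup_eq_top, smul_sup, sup_comm, sup_inf_assoc_of_le _ smul_le_right,
    (h.disjoint.mono_left smul_le_right).eq_bot, sup_bot_eq]

theorem sup_comap_mkQ_eq_top {A N : Submodule R M} {C : Submodule R (M ⧸ N)}
    (h : Codisjoint (A.map N.mkQ) C) : A ⊔ C.comap N.mkQ = ⊤ := by
  have hN : N ≤ A ⊔ C.comap N.mkQ :=
    le_sup_of_le_right fun x hx => by simp [(Submodule.Quotient.mk_eq_zero N).2 hx]
  rw [← sup_eq_left.2 hN, sup_comm, ← comap_map_mkQ, map_sup,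
    map_comap_eq_of_surjective N.mkQ_surjective, h.eq_top, comap_top]

theorem inf_comap_mkQ_le {A N : Submodule R M} {C : Submodule R (M ⧸ N)}
    (h : Disjoint (A.map N.mkQ) C) : A ⊓ C.comap N.mkQ ≤ N :=
  calc A ⊓ C.comap N.mkQ ≤ (A.map N.mkQ).comap N.mkQ ⊓ C.comap N.mkQ :=
        inf_le_inf_right _ (le_comap_map _ _)
    _ = N := by rw [← comap_inf, h.eq_bot, comap_bot, ker_mkQ]

end Submodule

namespace IsLocalRing

open Submodule TensorProduct

variable {W M : Type*} [CommRing W] [IsLocalRing W] [AddCommGroup M] [Module W M]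
  [Module.Finite W M] [Module.Flat W M]

theorem exists_isCompl_le_le {A B : Submodule W M} (hsup : A ⊔ B = ⊤)
    (hinf : A ⊓ B ≤ maximalIdeal W • ⊤) :
    ∃ L T : Submodule W M, L ≤ A ∧ T ≤ B ∧ IsCompl L T ∧ Module.Free W L ∧ Module.Free W T := by
  let φ := TensorProduct.mk W (ResidueField W) M 1
  have mem_span_image : ∀ (S : Submodule W M) v,
      v ∈ span (ResidueField W) (φ '' S) ↔ v ∈ S.map φ := by
    intro S v
    rw [← restrictScalars_mem W, restrictScalars_span W _ residue_surjective,
      ← map_span, span_eq]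
  have hcompl : IsCompl (span (ResidueField W) (φ '' A)) (span (ResidueField W) (φ '' B)) := by
    constructor
    · rw [disjoint_def]
      intro v hA hB
      exact disjoint_def.1
        (disjoint_map_of_inf_le_smul_top φ (LinearMap.ker_tensorProductMk M) hsup hinf)
        v ((mem_span_image A v).1 hA) ((mem_span_image B v).1 hB)
    · rw [codisjoint_iff, eq_top_iff]
      rintro v -
      obtain ⟨u, rfl⟩ := TensorProduct.mk_surjective W M _ residue_surjective v
      obtain ⟨a, ha, b, hb, rfl⟩ := mem_sup.1 (hsup ▸ mem_top : u ∈ A ⊔ B)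
      rw [map_add]
      exact add_mem (mem_sup_left (subset_span ⟨a, ha, rfl⟩))
        (mem_sup_right (subset_span ⟨b, hb, rfl⟩))
  let b₁ := Module.Basis.ofVectorSpace (ResidueField W) (span (ResidueField W) (φ '' A))
  let b₂ := Module.Basis.ofVectorSpace (ResidueField W) (span (ResidueField W) (φ '' B))
  let b := (b₁.prod b₂).map (prodEquivOfIsCompl _ _ hcompl)
  choose x hxA hx using fun i => (mem_span_image A (b₁ i)).1 (b₁ i).2
  choose y hyB hy using fun j => (mem_span_image B (b₂ j)).1 (b₂ j).2
  have hb : ∀ i, (1 : ResidueField W) ⊗ₜ Sum.elim x y i = b i := by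
    rintro (i | j)
    · simpa [b, φ] using hx i
    · simpa [b, φ] using hy j
  have hli : LinearIndependent W (Sum.elim x y) :=
    Module.IsLocalRing.linearIndependent_of_flat _ <| by
      rw [show ⇑φ ∘ Sum.elim x y = b from funext hb]
      exact b.linearIndependent
  have hspan : span W (Set.range (Sum.elim x y)) = ⊤ := span_eq_top_of_tmul_eq_basis _ b hb
  refine ⟨span W (Set.range x), span W (Set.range y), span_le.2 (Set.range_subset_iff.2 hxA),
    span_le.2 (Set.range_subset_iff.2 hyB), ?_,
    .of_basis (.span (hli.comp _ Sum.inl_injective)),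
    .of_basis (.span (hli.comp _ Sum.inr_injective))⟩
  simpa only [← Set.range_comp, Sum.elim_comp_inl, Sum.elim_comp_inr] using
    hli.isCompl_span_image hspan Set.isCompl_range_inl_range_inr

theorem exists_normal_decomposition {I : Ideal W} (hI : I ≤ maximalIdeal W)
    {M₁ : Submodule W M} (hIM : I • ⊤ ≤ M₁) {C : Submodule W (M ⧸ I • (⊤ : Submodule W M))}
    (hC : IsCompl (M₁.map (I • (⊤ : Submodule W M)).mkQ) C) :
    ∃ L T : Submodule W M, IsCompl L T ∧ Module.Free W L ∧ Module.Free W T ∧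
      M₁ = L ⊔ I • T := by
  have hinf : M₁ ⊓ C.comap (I • (⊤ : Submodule W M)).mkQ ≤ I • ⊤ :=
    inf_comap_mkQ_le hC.disjoint
  obtain ⟨L, T, hLM₁, hTC, hLT, hL, hT⟩ := exists_isCompl_le_le
    (sup_comap_mkQ_eq_top hC.codisjoint) (hinf.trans (smul_mono_left hI))
  refine ⟨L, T, hLT, hL, hT, ?_⟩
  have hM₁T : M₁ ⊓ T = I • T := by
    refine le_antisymm ?_ (le_inf ((smul_mono_right I le_top).trans hIM) smul_le_right)
    calc M₁ ⊓ T ≤ I • ⊤ ⊓ T := le_inf ((inf_le_inf_left M₁ hTC).trans hinf) inf_le_right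
      _ = I • T := smul_top_inf_eq_smul_of_isCompl I hLT
  calc M₁ = (L ⊔ T) ⊓ M₁ := by rw [hLT.sup_eq_top, top_inf_eq]
    _ = L ⊔ I • T := by rw [sup_inf_assoc_of_le T hLM₁, inf_comm, hM₁T]

end IsLocalRing

theorem pair_normal_decomposition_general
    (p : ℕ) [Fact p.Prime] (R : Type*) [CommRing R] [IsLocalRing R]
    [CharP (IsLocalRing.ResidueField R) p]
    (M : Type*) [AddCommGroup M] [Module (WittVector p R) M]
    [Module.Free (WittVector p R) M] [Module.Finite (WittVector p R) M]
    (M₁ : Submodule (WittVector p R) M)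
    (hIM : RingHom.ker (WittVector.constantCoeff : WittVector p R →+* R) •
        (⊤ : Submodule (WittVector p R) M) ≤ M₁)
    (hsummand : ∃ C : Submodule (WittVector p R)
        (M ⧸ (RingHom.ker (WittVector.constantCoeff : WittVector p R →+* R) •
          (⊤ : Submodule (WittVector p R) M))),
        IsCompl (M₁.map (RingHom.ker (WittVector.constantCoeff : WittVector p R →+* R) •
          (⊤ : Submodule (WittVector p R) M)).mkQ) C) :
    ∃ L T : Submodule (WittVector p R) M,
      IsCompl L T ∧
      Module.Free (WittVector p R) L ∧
      Module.Free (WittVector p R) T ∧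
      M₁ = L ⊔ (RingHom.ker (WittVector.constantCoeff : WittVector p R →+* R) • T) := by
  have hp : (p : R) ∈ IsLocalRing.maximalIdeal R := by
    rw [← IsLocalRing.residue_eq_zero_iff, map_natCast, CharP.cast_eq_zero]
  have := WittVector.isLocalRing hp
  obtain ⟨C, hC⟩ := hsummand
  exact IsLocalRing.exists_normal_decomposition
    (IsLocalRing.le_maximalIdeal (RingHom.ker_ne_top _)) hIM hC

/-- Let `R` be a `p`-complete local ring (with residue characteristic `p`)
and let `(M, M₁)` be a pair over `R` with `M` free of rank `h` over `W(R)`.  Then `(M, M₁)`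
admits a normal decomposition: there exist free `W(R)`-submodules `L, T ⊆ M` with
`M = L ⊕ T` and `M₁ = L ⊕ I_R·T`. -/
theorem pair_normal_decomposition
    (p : ℕ) [Fact p.Prime] (R : Type*) [CommRing R] [IsLocalRing R]
    (hcomplete : IsAdicComplete (Ideal.span {(p : R)}) R)
    [CharP (IsLocalRing.ResidueField R) p]
    (M : Type*) [AddCommGroup M] [Module (WittVector p R) M]
    [Module.Free (WittVector p R) M] [Module.Finite (WittVector p R) M]
    (h : ℕ) (hrank : Module.finrank (WittVector p R) M = h)
    (M₁ : Submodule (WittVector p R) M)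
    (hIM : RingHom.ker (WittVector.constantCoeff : WittVector p R →+* R) •
        (⊤ : Submodule (WittVector p R) M) ≤ M₁)
    (hsummand : ∃ C : Submodule (WittVector p R)
        (M ⧸ (RingHom.ker (WittVector.constantCoeff : WittVector p R →+* R) •
          (⊤ : Submodule (WittVector p R) M))),
        IsCompl (M₁.map (RingHom.ker (WittVector.constantCoeff : WittVector p R →+* R) •
          (⊤ : Submodule (WittVector p R) M)).mkQ) C) :
    ∃ L T : Submodule (WittVector p R) M,
      IsCompl L T ∧
      Module.Free (WittVector p R) L ∧
      Module.Free (WittVector p R) T ∧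
      M₁ = L ⊔ (RingHom.ker (WittVector.constantCoeff : WittVector p R →+* R) • T) :=
  pair_normal_decomposition_general p R M M₁ hIM hsummand
end

section
/- Let K₀ be a field, A a complete local ring that is a K₀-algebra, with maximal ideal m and residue field K = A/m, such that K is a finite separable field extension of K₀ (via the composite K₀ → A → K). Then the projection A → K admits a unique K₀-algebra section K → A. -/
/-! A complete local ring is Henselian. Since `K/K₀` is finite separable it has a power basis,
so a `K₀`-algebra map `K → A` is the same as a root in `A` of the minimal polynomial `p` of the
generator `α`, and it is a section exactly when that root reduces to `α`. As `α` is a simple root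
of `p` over `K`, Hensel's lemma lifts it to exactly one root of `p` in `A`. -/

open Polynomial IsLocalRing

theorem HenselianLocalRing.of_henselianRing (R : Type*) [CommRing R] [IsLocalRing R]
    [HenselianRing R (maximalIdeal R)] : HenselianLocalRing R where
  is_henselian f hf a₀ h₁ h₂ :=
    HenselianRing.is_henselian f hf a₀ h₁ (h₂.map (Ideal.Quotient.mk (maximalIdeal R)))

theorem IsLocalRing.eq_of_isRoot_of_residue_eq {R : Type*} [CommRing R] [IsLocalRing R]
    {f : R[X]} {a b : R} (ha : f.IsRoot a) (hb : f.IsRoot b)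
    (hab : residue R a = residue R b) (hsimple : aeval (residue R a) (derivative f) ≠ 0) :
    a = b := by
  refine eq_of_eval_eq_zero_of_not_isUnit_sub ha hb ?_ ?_
  · rwa [← residue_ne_zero_iff_isUnit, map_sub, sub_ne_zero, not_not]
  · rwa [← residue_ne_zero_iff_isUnit, ← ResidueField.algebraMap_eq,
      ← aeval_algebraMap_apply_eq_algebraMap_eval]

theorem HenselianLocalRing.existsUnique_isRoot_residue_eq {R : Type*} [CommRing R]
    [HenselianLocalRing R] {f : R[X]} (hf : f.Monic) {a₀ : ResidueField R}
    (hroot : aeval a₀ f = 0) (hsimple : aeval a₀ (derivative f) ≠ 0) :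
    ∃! a : R, f.IsRoot a ∧ residue R a = a₀ := by
  have hensel := ((HenselianLocalRing.TFAE R).out 0 1).mp ‹_›
  obtain ⟨a, ha, rfl⟩ := hensel f hf a₀ hroot hsimple
  exact ⟨a, ⟨ha, rfl⟩, fun b ⟨hb, hba⟩ => (eq_of_isRoot_of_residue_eq ha hb hba.symm hsimple).symm⟩

theorem PowerBasis.leftInverse_iff {R S B : Type*} [CommRing R] [Ring S] [Algebra R S]
    [Ring B] [Algebra R B] (pb : PowerBasis R S) (f : B →ₐ[R] S) (s : S →ₐ[R] B) :
    Function.LeftInverse f s ↔ f (s pb.gen) = pb.gen :=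
  ⟨fun h => h pb.gen,
    fun h x => DFunLike.congr_fun (pb.algHom_ext (f := f.comp s) (g := AlgHom.id R S) h) x⟩

/-- Let `K₀` be a field, `A` a complete local ring that is a
`K₀`-algebra, with maximal ideal `m` and residue field `K = A/m`, such that `K` is a finite
separable field extension of `K₀` (via the composite `K₀ → A → K`).  Then the projection
`A → K` admits a unique `K₀`-algebra section `K → A`. -/
theorem complete_local_ring_unique_section
    (K₀ : Type*) [Field K₀] (A : Type*) [CommRing A] [IsLocalRing A] [Algebra K₀ A]
    (hcomplete : IsAdicComplete (IsLocalRing.maximalIdeal A) A)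
    [FiniteDimensional K₀ (IsLocalRing.ResidueField A)]
    [Algebra.IsSeparable K₀ (IsLocalRing.ResidueField A)] :
    ∃! s : IsLocalRing.ResidueField A →ₐ[K₀] A,
      ∀ x : IsLocalRing.ResidueField A, IsLocalRing.residue A (s x) = x := by
  have := hcomplete
  have := HenselianLocalRing.of_henselianRing A
  let pb := Field.powerBasisOfFiniteOfSeparable K₀ (ResidueField A)
  let p := minpoly K₀ pb.gen
  have hp : aeval pb.gen p = 0 := minpoly.aeval K₀ pb.gen
  have hp_simple : aeval pb.gen (derivative p) ≠ 0 :=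
    (Algebra.IsSeparable.isSeparable K₀ pb.gen).aeval_derivative_ne_zero hp
  obtain ⟨a, ⟨ha, ha_res⟩, ha_unique⟩ :=
    HenselianLocalRing.existsUnique_isRoot_residue_eq
      ((minpoly.monic pb.isIntegral_gen).map (algebraMap K₀ A)) (a₀ := pb.gen)
      (by rwa [aeval_map_algebraMap]) (by rwa [derivative_map, aeval_map_algebraMap])
  have hpa : aeval a p = 0 := by rwa [aeval_def, eval₂_eq_eval_map]
  let π := IsScalarTower.toAlgHom K₀ A (ResidueField A)
  refine ⟨pb.lift a hpa, (pb.leftInverse_iff π _).mpr ?_, fun t ht => pb.algHom_ext ?_⟩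
  · simpa [π, pb.lift_gen] using ha_res
  · rw [pb.lift_gen]
    refine ha_unique _ ⟨?_, (pb.leftInverse_iff π t).mp ht⟩
    rw [IsRoot, ← eval₂_eq_eval_map, ← aeval_def, aeval_algHom_apply, hp, map_zero]
end
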